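/- Let Λ be an integrable real random variable on a probability space, and let r ≠ 0 be a real number such that exp(−r·Λ) is integrable. Then the Bayes estimator under the Linex loss, δ_L = −(1/r)·log E[exp(−r·Λ)], is the unique minimizer over δ ∈ ℝ of the posterior expected loss δ ↦ E[exp(r·(δ − Λ)) − r·(δ − Λ) − 1]. -/

import Mathlib

/-!
Writing `M = E[exp(-rΛ)] > 0`, linearity of the integral turns the posterior expected loss into
`exp(rδ) M - rδ + r E[Λ] - 1`. With `x = rδ + log M` this is `(exp x - x - 1) + (r E[Λ] - log M)`,
and `exp x - x - 1 > 0` unless `x = 0`, i.e. unless `δ = -(1/r) log M`.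
-/

open MeasureTheory

theorem integral_linex_loss {Ω : Type*} [MeasurableSpace Ω] (μ : Measure Ω)
    [IsProbabilityMeasure μ] {Λ : Ω → ℝ} (r δ : ℝ) (hΛ : Integrable Λ μ)
    (hexp : Integrable (fun ω => Real.exp (-r * Λ ω)) μ) :
    ∫ ω, Real.exp (r * (δ - Λ ω)) - r * (δ - Λ ω) - 1 ∂μ
      = Real.exp (r * δ) * ∫ ω, Real.exp (-r * Λ ω) ∂μ - r * δ + r * ∫ ω, Λ ω ∂μ - 1 := by
  have hsplit : (fun ω => Real.exp (r * (δ - Λ ω)) - r * (δ - Λ ω) - 1)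
      = fun ω => (Real.exp (r * δ) * Real.exp (-r * Λ ω) + r * Λ ω) - (r * δ + 1) := by
    funext ω
    rw [← Real.exp_add]
    ring_nf
  have hint : Integrable (fun ω => Real.exp (r * δ) * Real.exp (-r * Λ ω) + r * Λ ω) μ :=
    (hexp.const_mul _).add (hΛ.const_mul r)
  rw [hsplit, integral_sub hint (integrable_const _),
    integral_add (hexp.const_mul _) (hΛ.const_mul r), integral_const_mul, integral_const_mul,
    integral_const]
  simp only [probReal_univ, smul_eq_mul, one_mul]
  ring

theorem exp_mul_mul_sub_mul_lt_of_ne {M r δ : ℝ} (hM : 0 < M) (hr : r ≠ 0)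
    (hδ : δ ≠ -(1 / r) * Real.log M) :
    Real.exp (r * (-(1 / r) * Real.log M)) * M - r * (-(1 / r) * Real.log M)
      < Real.exp (r * δ) * M - r * δ := by
  have hr_mul : r * (-(1 / r) * Real.log M) = -Real.log M := by field_simp
  have hx : r * δ + Real.log M ≠ 0 := by
    contrapose! hδ
    field_simp
    linarith
  have hexp : Real.exp (r * δ) * M = Real.exp (r * δ + Real.log M) := by
    rw [Real.exp_add, Real.exp_log hM]
  rw [hr_mul, Real.exp_neg, Real.exp_log hM, inv_mul_cancel₀ hM.ne', hexp]
  linarith [Real.add_one_lt_exp hx]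

/-- Under the Linex loss `L(λ, δ) = exp(r(δ - λ)) - r(δ - λ) - 1`, the Bayes estimator
`δ_L = -(1/r) log E[exp(-r Λ)]` is the unique minimizer of the posterior expected loss. -/
theorem bayes_estimator_linex {Ω : Type*} [MeasurableSpace Ω]
    (μ : Measure Ω) [IsProbabilityMeasure μ] (Λ : Ω → ℝ) (r : ℝ) (hr : r ≠ 0)
    (hintΛ : Integrable Λ μ)
    (hintexp : Integrable (fun ω => Real.exp (-r * Λ ω)) μ) :
    ∀ δ : ℝ, δ ≠ -(1 / r) * Real.log (∫ ω, Real.exp (-r * Λ ω) ∂μ) →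
      (∫ ω, Real.exp (r * (-(1 / r) * Real.log (∫ ω', Real.exp (-r * Λ ω') ∂μ) - Λ ω))
          - r * (-(1 / r) * Real.log (∫ ω', Real.exp (-r * Λ ω') ∂μ) - Λ ω) - 1 ∂μ)
        < ∫ ω, Real.exp (r * (δ - Λ ω)) - r * (δ - Λ ω) - 1 ∂μ := by
  intro δ hδ
  rw [integral_linex_loss μ _ _ hintΛ hintexp, integral_linex_loss μ _ _ hintΛ hintexp]
  linarith [exp_mul_mul_sub_mul_lt_of_ne (integral_exp_pos hintexp) hr hδ]
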